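/- If W and W₁, W₂, … are graphons with δ_□(W_m, W) → 0 as m → ∞, then limsup_{m→∞} Ent(W_m) ≤ Ent(W). -/

import Mathlib

open MeasureTheory Set Filter

noncomputable section

/-- A graphon: a symmetric measurable function `ℝ → ℝ → ℝ` with values in `[0,1]`
(only its values on `[0,1]²` matter). -/
def IsGraphon (W : ℝ → ℝ → ℝ) : Prop :=
  (∀ x y, W x y = W y x) ∧ Measurable (Function.uncurry W) ∧
    ∀ x y, W x y ∈ Set.Icc (0 : ℝ) 1

/-- The cut norm `‖U‖_□`, the supremum over measurable `S, T ⊆ [0,1]` of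
`|∫_{S×T} U|`. -/
def cutNorm (U : ℝ → ℝ → ℝ) : ℝ :=
  sSup { r : ℝ | ∃ S T : Set ℝ, MeasurableSet S ∧ MeasurableSet T ∧
    S ⊆ Set.Icc 0 1 ∧ T ⊆ Set.Icc 0 1 ∧
    r = |∫ p in S ×ˢ T, U p.1 p.2| }

/-- `d_□(W₁, W₂) = ‖W₁ - W₂‖_□`. -/
def dCut (W₁ W₂ : ℝ → ℝ → ℝ) : ℝ := cutNorm (fun x y => W₁ x y - W₂ x y)

/-- A Lebesgue-measure-preserving map `[0,1] → [0,1]`. -/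
def IsMPSelf (σ : ℝ → ℝ) : Prop :=
  MeasureTheory.MeasurePreserving σ
      (MeasureTheory.volume.restrict (Set.Icc (0:ℝ) 1))
      (MeasureTheory.volume.restrict (Set.Icc (0:ℝ) 1)) ∧
    Set.MapsTo σ (Set.Icc (0:ℝ) 1) (Set.Icc (0:ℝ) 1)

/-- The cut distance `δ_□(W₁, W₂)`. -/
def deltaCut (W₁ W₂ : ℝ → ℝ → ℝ) : ℝ :=
  sInf { r : ℝ | ∃ σ₁ σ₂ : ℝ → ℝ, IsMPSelf σ₁ ∧ IsMPSelf σ₂ ∧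
    r = cutNorm (fun x y => W₁ (σ₁ x) (σ₁ y) - W₂ (σ₂ x) (σ₂ y)) }

/-- The binary entropy function `h` (base-2 logarithm; `logb 2 0 = 0` by convention,
so `h 0 = h 1 = 0`). -/
def binEnt (x : ℝ) : ℝ := -x * Real.logb 2 x - (1 - x) * Real.logb 2 (1 - x)

/-- `h̃ x = h (min x (1/2))`. -/
def htilde (x : ℝ) : ℝ := binEnt (min x (1/2))

/-- The entropy `Ent(W) = ∫₀¹∫₀¹ h(W(x,y)) dx dy` of a graphon. -/
def graphonEnt (W : ℝ → ℝ → ℝ) : ℝ :=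
  ∫ x in Set.Icc (0:ℝ) 1, ∫ y in Set.Icc (0:ℝ) 1, binEnt (W x y)

open Classical in
/-- The graphon `W_G` of a simple graph `G` on `{1, …, n}` (vertices as `Fin n`,
vertex `i : Fin n` representing `i+1`): `W_G x y = 1` iff `⌈nx⌉⌈ny⌉ ∈ E(G)`. -/
def graphonOfGraph {n : ℕ} (G : SimpleGraph (Fin n)) : ℝ → ℝ → ℝ := fun x y =>
  if ∃ i j : Fin n, G.Adj i j ∧ ⌈(n : ℝ) * x⌉ = ((i : ℕ) : ℤ) + 1 ∧
      ⌈(n : ℝ) * y⌉ = ((j : ℕ) : ℤ) + 1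
  then 1 else 0

/-- A labelled graph class: a set of graphs on `{1,…,n}` for each `n`. -/
abbrev GraphClass := ∀ n : ℕ, Set (SimpleGraph (Fin n))

/-- A graph class is closed under relabelling by permutations. -/
def IsGraphClass (Q : GraphClass) : Prop :=
  ∀ (n : ℕ) (π : Equiv.Perm (Fin n)) (G : SimpleGraph (Fin n)),
    G ∈ Q n → G.comap ⇑π ∈ Q n

/-- A hereditary graph class: a graph class closed under taking induced subgraphs
(relabelled by the order-preserving bijection). -/
def IsHereditary (Q : GraphClass) : Prop :=
  IsGraphClass Q ∧
    ∀ (m n : ℕ) (f : Fin m → Fin n), StrictMono f →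
      ∀ G ∈ Q n, G.comap f ∈ Q m

/-- `Q̂`: the set of graphons which are limits (in cut distance) of sequences of graphs in
the class `Q` whose orders tend to infinity. -/
def limitSet (Q : GraphClass) : Set (ℝ → ℝ → ℝ) :=
  { W | IsGraphon W ∧
    ∃ (nk : ℕ → ℕ) (Gk : ∀ k, SimpleGraph (Fin (nk k))),
      (∀ k, Gk k ∈ Q (nk k)) ∧ Filter.Tendsto nk Filter.atTop Filter.atTop ∧
      Filter.Tendsto (fun k => deltaCut (graphonOfGraph (Gk k)) W) Filter.atTop (nhds 0) }

/-- `C(n,2) = n(n-1)/2` as a real number. -/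
def choose2 (n : ℕ) : ℝ := (n : ℝ) * ((n : ℝ) - 1) / 2

open Classical in
/-- The step function `E[W | P]` obtained by averaging `W` over the products of the
parts of the partition `P` of `[0,1]`. -/
def condExpPart {k : ℕ} (P : Fin k → Set ℝ) (W : ℝ → ℝ → ℝ) : ℝ → ℝ → ℝ := fun x y =>
  ∑ i : Fin k, ∑ j : Fin k,
    if x ∈ P i ∧ y ∈ P j then ⨍ p in (P i) ×ˢ (P j), W p.1 p.2 else 0

/-- `W̄_n`: the step function of `W` for the partition of `[0,1]` into `n` consecutive
intervals of length `1/n`. -/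
def barStep (n : ℕ) (W : ℝ → ℝ → ℝ) : ℝ → ℝ → ℝ :=
  condExpPart (fun i : Fin n => Set.Ioc (((i : ℕ) : ℝ)/n) ((((i : ℕ) : ℝ) + 1)/n)) W

/-- `N̂_□(n, δ; W)`: the number of graphs `G` on `{1,…,n}` with `d_□(W_G, W) ≤ δ`. -/
def NhatCut (n : ℕ) (δ : ℝ) (W : ℝ → ℝ → ℝ) : ℕ :=
  Nat.card {G : SimpleGraph (Fin n) // dCut (graphonOfGraph G) W ≤ δ}

/-- `N_□(n, δ; W)`: the number of graphs `G` on `{1,…,n}` with `δ_□(W_G, W) ≤ δ`. -/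
def NCut (n : ℕ) (δ : ℝ) (W : ℝ → ℝ → ℝ) : ℕ :=
  Nat.card {G : SimpleGraph (Fin n) // deltaCut (graphonOfGraph G) W ≤ δ}

open Classical in
/-- The induced density `p(F; W)` of a graph `F` on `{1,…,k}` in a graphon `W`. -/
def inducedDensity {k : ℕ} (F : SimpleGraph (Fin k)) (W : ℝ → ℝ → ℝ) : ℝ :=
  ∫ x : Fin k → ℝ in Set.univ.pi (fun _ : Fin k => Set.Icc (0:ℝ) 1),
    ∏ i : Fin k, ∏ j : Fin k,
      if i < j then (if F.Adj i j then W (x i) (x j) else 1 - W (x i) (x j)) else 1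

open Classical in
/-- The randomness support graphon `1_{rand(W)}` of `W`. -/
def randIndicator (W : ℝ → ℝ → ℝ) : ℝ → ℝ → ℝ := fun x y =>
  if 0 < W x y ∧ W x y < 1 then 1 else 0

/-- A kernel `U` is `K_r`-free if `∏_{i<j} U(x_i, x_j) = 0` for a.e. `x ∈ [0,1]^r`. -/
def KFree (r : ℕ) (U : ℝ → ℝ → ℝ) : Prop :=
  ∀ᵐ x ∂(MeasureTheory.volume.restrict (Set.univ.pi fun _ : Fin r => Set.Icc (0:ℝ) 1)),
    (∏ i : Fin r, ∏ j : Fin r, if i < j then U (x i) (x j) else 1) = 0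

open Classical in
/-- The graphon `W^{(r,s)}`: equal to `1/2` off the diagonal blocks, `1` on the first `s`
diagonal blocks `I_i × I_i`, and `0` on the remaining diagonal blocks. -/
def Wrs (r s : ℕ) : ℝ → ℝ → ℝ := fun x y =>
  if ∃ i j : Fin r, i ≠ j ∧ x ∈ Set.Ioc (((i:ℕ):ℝ)/r) ((((i:ℕ):ℝ)+1)/r) ∧
      y ∈ Set.Ioc (((j:ℕ):ℝ)/r) ((((j:ℕ):ℝ)+1)/r)
  then 1/2
  else if ∃ i : Fin r, (i:ℕ) < s ∧ x ∈ Set.Ioc (((i:ℕ):ℝ)/r) ((((i:ℕ):ℝ)+1)/r) ∧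
      y ∈ Set.Ioc (((i:ℕ):ℝ)/r) ((((i:ℕ):ℝ)+1)/r)
  then 1 else 0

/-- `E_r = ⋃_{i ≠ j} I_i × I_j` where `I_i`, `i = 1, …, r`, are the consecutive
intervals of length `1/r` in `[0,1]`. -/
def Er (r : ℕ) : Set (ℝ × ℝ) :=
  ⋃ (i : Fin r) (j : Fin r) (_ : i ≠ j),
    (Set.Ioc (((i:ℕ):ℝ)/r) ((((i:ℕ):ℝ)+1)/r)) ×ˢ (Set.Ioc (((j:ℕ):ℝ)/r) ((((j:ℕ):ℝ)+1)/r))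

/-- `R_r`: the set of graphons equal to `1/2` on `E_r` and `{0,1}`-valued elsewhere
on `[0,1]²`. -/
def Rset (r : ℕ) : Set (ℝ → ℝ → ℝ) :=
  { W | IsGraphon W ∧ (∀ p ∈ Er r, W p.1 p.2 = 1/2) ∧
      ∀ p ∈ ((Set.Icc (0:ℝ) 1) ×ˢ (Set.Icc (0:ℝ) 1)) \ Er r,
        W p.1 p.2 = 0 ∨ W p.1 p.2 = 1 }

/-- A graphon is random-free if it is `{0,1}`-valued a.e. on `[0,1]²`. -/
def IsRandomFree (W : ℝ → ℝ → ℝ) : Prop :=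
  ∀ᵐ p ∂(MeasureTheory.volume.restrict ((Set.Icc (0:ℝ) 1) ×ˢ (Set.Icc (0:ℝ) 1))),
    W (Prod.fst p) (Prod.snd p) = 0 ∨ W (Prod.fst p) (Prod.snd p) = 1

/-!
Pull `U` and `W` back along measure-preserving maps `σ₁, σ₂` that nearly attain `δ_□(U, W)`,
and cut the square into the boxes `σ₂⁻¹ Iᵢ × σ₂⁻¹ Iⱼ`, where the `Iᵢ` are the intervals of the
uniform grid of mesh `1/n`. Since `h` is concave, Jensen's inequality bounds `Ent(U)` by the sum
over the boxes of `|box| · h(average of U on the box)`. On each box the averages of `U ∘ σ₁` and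
`W ∘ σ₂` differ by at most `n² ‖U^σ₁ - W^σ₂‖_□`, so by uniform continuity of `h` that sum is at
most `∑ᵢⱼ n⁻² h(average of W on Iᵢ × Iⱼ) + ε` once `δ_□(U, W)` is small enough. By the Lebesgue
differentiation theorem and dominated convergence, this grid entropy of `W` tends to `Ent(W)`
as `n → ∞`.
-/

open Function Topology

lemma binEnt_eq_binEntropy (x : ℝ) : binEnt x = Real.binEntropy x / Real.log 2 := by
  simp only [binEnt, Real.binEntropy, Real.logb, Real.log_inv]
  ring

lemma continuous_binEnt : Continuous binEnt := by
  simp only [funext binEnt_eq_binEntropy]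
  fun_prop

lemma concaveOn_binEnt : ConcaveOn ℝ (Icc 0 1) binEnt := by
  simpa only [smul_eq_mul, ← div_eq_inv_mul, ← binEnt_eq_binEntropy] using
    Real.strictConcave_binEntropy.concaveOn.smul (c := (Real.log 2)⁻¹) (by positivity)

lemma binEnt_mem_Icc {x : ℝ} (hx : x ∈ Icc 0 1) : binEnt x ∈ Icc 0 1 := by
  rw [binEnt_eq_binEntropy]
  have hlog : 0 < Real.log 2 := Real.log_pos one_lt_two
  exact ⟨div_nonneg (Real.binEntropy_nonneg hx.1 hx.2) hlog.le,
    (div_le_one hlog).2 Real.binEntropy_le_log_two⟩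

lemma uniformContinuousOn_binEnt : UniformContinuousOn binEnt (Icc 0 1) :=
  isCompact_Icc.uniformContinuousOn_of_continuous continuous_binEnt.continuousOn

lemma norm_le_one_of_mem_Icc {x : ℝ} (hx : x ∈ Icc (0 : ℝ) 1) : ‖x‖ ≤ 1 := by
  simpa using Real.dist_le_of_mem_Icc_01 hx (left_mem_Icc.2 zero_le_one)

section Blocks

variable {α ι : Type*} [MeasurableSpace α] [Fintype ι] {μ : Measure α} {s : ι → Set α}
  {f g : α → ℝ}

def blockEnt (μ : Measure α) (s : ι → Set α) (f : α → ℝ) : ℝ :=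
  ∑ k, μ.real (s k) * binEnt (⨍ x in s k, f x ∂μ)

lemma integrable_of_mem_Icc [IsFiniteMeasure μ] (hf : AEStronglyMeasurable f μ)
    (hf01 : ∀ᵐ x ∂μ, f x ∈ Icc (0 : ℝ) 1) : Integrable f μ :=
  .of_bound hf 1 <| hf01.mono fun _ => norm_le_one_of_mem_Icc

lemma integrable_binEnt_comp [IsFiniteMeasure μ] (hf : AEStronglyMeasurable f μ)
    (hf01 : ∀ᵐ x ∂μ, f x ∈ Icc (0 : ℝ) 1) : Integrable (fun x => binEnt (f x)) μ :=
  integrable_of_mem_Icc (continuous_binEnt.comp_aestronglyMeasurable hf)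
    (hf01.mono fun _ hx => binEnt_mem_Icc hx)

lemma setAverage_mem_Icc [IsFiniteMeasure μ] (hf : AEStronglyMeasurable f μ)
    (hf01 : ∀ᵐ x ∂μ, f x ∈ Icc (0 : ℝ) 1) (t : Set α) : ⨍ x in t, f x ∂μ ∈ Icc (0 : ℝ) 1 := by
  rcases eq_or_ne (μ t) 0 with h0 | h0
  · simp [Measure.restrict_eq_zero.2 h0]
  exact (convex_Icc 0 1).set_average_mem isClosed_Icc h0 (measure_ne_top _ _)
    (ae_restrict_of_ae hf01) (integrable_of_mem_Icc hf hf01).integrableOn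

lemma setIntegral_binEnt_le [IsFiniteMeasure μ] (hf : AEStronglyMeasurable f μ)
    (hf01 : ∀ᵐ x ∂μ, f x ∈ Icc (0 : ℝ) 1) (t : Set α) :
    ∫ x in t, binEnt (f x) ∂μ ≤ μ.real t * binEnt (⨍ x in t, f x ∂μ) := by
  rcases eq_or_ne (μ t) 0 with h0 | h0
  · simp [Measure.restrict_eq_zero.2 h0, measureReal_def, h0]
  rw [← measure_smul_setAverage _ (measure_ne_top μ t), smul_eq_mul]
  gcongr
  exact concaveOn_binEnt.le_map_set_average continuous_binEnt.continuousOn isClosed_Icc h0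
    (measure_ne_top _ _) (ae_restrict_of_ae hf01) (integrable_of_mem_Icc hf hf01).integrableOn
    (integrable_binEnt_comp hf hf01).integrableOn

lemma integral_binEnt_le_blockEnt [IsFiniteMeasure μ] (hs : ∀ k, MeasurableSet (s k))
    (hdisj : Pairwise (Disjoint on s)) (hcover : ∀ᵐ x ∂μ, x ∈ ⋃ k, s k)
    (hf : AEStronglyMeasurable f μ) (hf01 : ∀ᵐ x ∂μ, f x ∈ Icc (0 : ℝ) 1) :
    ∫ x, binEnt (f x) ∂μ ≤ blockEnt μ s f := by
  rw [← setIntegral_univ, ← setIntegral_congr_set (ae_eq_univ.2 hcover : (⋃ k, s k) =ᵐ[μ] univ),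
    integral_iUnion_fintype hs hdisj fun k => (integrable_binEnt_comp hf hf01).integrableOn]
  exact Finset.sum_le_sum fun k _ => setIntegral_binEnt_le hf hf01 (s k)

lemma blockEnt_le_blockEnt_add [IsProbabilityMeasure μ] (hs : ∀ k, MeasurableSet (s k))
    (hdisj : Pairwise (Disjoint on s)) (hf : AEStronglyMeasurable f μ)
    (hf01 : ∀ᵐ x ∂μ, f x ∈ Icc (0 : ℝ) 1) (hg : AEStronglyMeasurable g μ)
    (hg01 : ∀ᵐ x ∂μ, g x ∈ Icc (0 : ℝ) 1) {ε δ : ℝ} (hε : 0 ≤ ε)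
    (hδ : ∀ a ∈ Icc (0 : ℝ) 1, ∀ b ∈ Icc (0 : ℝ) 1, dist a b ≤ δ → dist (binEnt a) (binEnt b) ≤ ε)
    (hfg : ∀ k, |∫ x in s k, f x ∂μ - ∫ x in s k, g x ∂μ| ≤ δ * μ.real (s k)) :
    blockEnt μ s f ≤ blockEnt μ s g + ε := by
  have hblock : ∀ k, μ.real (s k) * binEnt (⨍ x in s k, f x ∂μ)
      ≤ μ.real (s k) * binEnt (⨍ x in s k, g x ∂μ) + μ.real (s k) * ε := by
    intro k
    rcases eq_or_lt_of_le (measureReal_nonneg : 0 ≤ μ.real (s k)) with h0 | hpos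
    · simp [← h0]
    have havg : dist (⨍ x in s k, f x ∂μ) (⨍ x in s k, g x ∂μ) ≤ δ := by
      rw [setAverage_eq, setAverage_eq, smul_eq_mul, smul_eq_mul, Real.dist_eq, ← mul_sub,
        abs_mul, abs_inv, abs_of_pos hpos, inv_mul_le_iff₀ hpos, mul_comm]
      exact hfg k
    have := hδ _ (setAverage_mem_Icc hf hf01 _) _ (setAverage_mem_Icc hg hg01 _) havg
    rw [Real.dist_eq, abs_le] at this
    rw [← mul_add]
    gcongr
    linarith
  calc blockEnt μ s f
      ≤ ∑ k, (μ.real (s k) * binEnt (⨍ x in s k, g x ∂μ) + μ.real (s k) * ε) :=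
        Finset.sum_le_sum fun k _ => hblock k
    _ = blockEnt μ s g + μ.real (⋃ k, s k) * ε := by
        rw [Finset.sum_add_distrib, ← Finset.sum_mul, measureReal_iUnion_fintype hdisj hs,
          blockEnt]
    _ ≤ blockEnt μ s g + ε := by
        gcongr
        exact mul_le_of_le_one_left hε measureReal_le_one

lemma blockEnt_comp_preimage {β : Type*} [MeasurableSpace β] {ν : Measure β} {T : α → β}
    (hT : MeasurePreserving T μ ν) {s : ι → Set β} (hs : ∀ k, MeasurableSet (s k))
    {f : β → ℝ} (hf : AEStronglyMeasurable f ν) :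
    blockEnt μ (fun k => T ⁻¹' s k) (fun x => f (T x)) = blockEnt ν s f := by
  refine Finset.sum_congr rfl fun k _ => ?_
  rw [hT.measureReal_preimage (hs k).nullMeasurableSet, setAverage_eq, setAverage_eq,
    hT.measureReal_preimage (hs k).nullMeasurableSet, ← hT.map_eq,
    setIntegral_map (hs k) (hT.map_eq ▸ hf) hT.measurable.aemeasurable]

def blockStep (μ : Measure α) (s : ι → Set α) (f : α → ℝ) (x : α) : ℝ :=
  ∑ k, (s k).indicator (fun _ => binEnt (⨍ y in s k, f y ∂μ)) x

lemma measurable_blockStep (hs : ∀ k, MeasurableSet (s k)) : Measurable (blockStep μ s f) :=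
  Finset.measurable_sum _ fun k _ => measurable_const.indicator (hs k)

lemma integral_blockStep [IsFiniteMeasure μ] (hs : ∀ k, MeasurableSet (s k)) :
    ∫ x, blockStep μ s f x ∂μ = blockEnt μ s f := by
  unfold blockStep
  rw [integral_finsetSum _ fun k _ => (integrable_const _).indicator (hs k)]
  exact Finset.sum_congr rfl fun k _ => by rw [integral_indicator_const _ (hs k), smul_eq_mul]

lemma blockStep_eq_of_mem (hdisj : Pairwise (Disjoint on s)) {k : ι} {x : α} (hx : x ∈ s k) :
    blockStep μ s f x = binEnt (⨍ y in s k, f y ∂μ) := by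
  rw [blockStep, Finset.sum_eq_single k, indicator_of_mem hx]
  · exact fun l _ hlk => indicator_of_notMem (fun hxl => (hdisj hlk).ne_of_mem hxl hx rfl) _
  · exact fun h => absurd (Finset.mem_univ k) h

lemma blockStep_mem_Icc [IsFiniteMeasure μ] (hdisj : Pairwise (Disjoint on s))
    (hf : AEStronglyMeasurable f μ) (hf01 : ∀ᵐ x ∂μ, f x ∈ Icc (0 : ℝ) 1) (x : α) :
    blockStep μ s f x ∈ Icc (0 : ℝ) 1 := by
  by_cases hx : ∃ k, x ∈ s k
  · obtain ⟨k, hk⟩ := hx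
    rw [blockStep_eq_of_mem hdisj hk]
    exact binEnt_mem_Icc (setAverage_mem_Icc hf hf01 _)
  · rw [blockStep, Finset.sum_eq_zero fun k _ => indicator_of_notMem (not_exists.1 hx k) _]
    exact ⟨le_rfl, zero_le_one⟩

end Blocks

instance : IsProbabilityMeasure (volume.restrict (Icc (0 : ℝ) 1)) :=
  ⟨by simp [Real.volume_Icc]⟩

abbrev volSquare : Measure (ℝ × ℝ) :=
  (volume.restrict (Icc (0 : ℝ) 1)).prod (volume.restrict (Icc (0 : ℝ) 1))

lemma volSquare_eq_restrict : volSquare = volume.restrict (Icc 0 1 ×ˢ Icc 0 1) := by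
  rw [volSquare, Measure.prod_restrict, Measure.volume_eq_prod]

lemma volSquare_restrict_of_subset {t : Set (ℝ × ℝ)} (ht : t ⊆ Icc 0 1 ×ˢ Icc 0 1) :
    volSquare.restrict t = volume.restrict t := by
  rw [volSquare_eq_restrict, Measure.restrict_restrict_of_subset ht]

lemma ae_volSquare_mem_Ioc : ∀ᵐ p ∂volSquare, p ∈ Ioc (0 : ℝ) 1 ×ˢ Ioc (0 : ℝ) 1 := by
  have h : ∀ᵐ x ∂volume.restrict (Icc (0 : ℝ) 1), x ∈ Ioc (0 : ℝ) 1 := by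
    rw [Measure.restrict_congr_set Ioc_ae_eq_Icc.symm]
    exact ae_restrict_mem measurableSet_Ioc
  exact (measurePreserving_fst.quasiMeasurePreserving.ae h).and
    (measurePreserving_snd.quasiMeasurePreserving.ae h)

lemma integral_volSquare_eq_graphonEnt {U : ℝ → ℝ → ℝ} (hU : IsGraphon U) :
    ∫ p, binEnt (U p.1 p.2) ∂volSquare = graphonEnt U :=
  integral_prod _ <| integrable_binEnt_comp hU.2.1.aestronglyMeasurable
    (.of_forall fun p => hU.2.2 p.1 p.2)

def gridInterval (n : ℕ) (i : Fin n) : Set ℝ := Ioc ((i : ℕ) / n) (((i : ℕ) + 1) / n)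

def gridBox (n : ℕ) (k : Fin n × Fin n) : Set (ℝ × ℝ) :=
  gridInterval n k.1 ×ˢ gridInterval n k.2

def gridCenter (n : ℕ) (k : Fin n × Fin n) : ℝ × ℝ :=
  ((((k.1 : ℕ) : ℝ) + 1 / 2) / n, (((k.2 : ℕ) : ℝ) + 1 / 2) / n)

section Grid

variable {n : ℕ}

lemma gridInterval_subset_Icc (i : Fin n) : gridInterval n i ⊆ Icc 0 1 := by
  have hn : (0 : ℝ) < n := Nat.cast_pos.2 i.pos
  have hi : ((i : ℕ) : ℝ) + 1 ≤ n := by exact_mod_cast i.isLt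
  exact Ioc_subset_Icc_self.trans
    (Icc_subset_Icc (by positivity) ((div_le_one hn).2 hi))

lemma volume_gridInterval (i : Fin n) : volume (gridInterval n i) = ENNReal.ofReal (1 / n) := by
  rw [gridInterval, Real.volume_Ioc, ← sub_div, add_sub_cancel_left]

lemma disjoint_gridInterval {i j : Fin n} (hij : i ≠ j) :
    Disjoint (gridInterval n i) (gridInterval n j) := by
  have hn : (0 : ℝ) < n := Nat.cast_pos.2 i.pos
  rcases lt_or_gt_of_ne (Fin.val_ne_of_ne hij) with h | h
  · refine Ioc_disjoint_Ioc_of_le (div_le_div_of_nonneg_right ?_ hn.le)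
    exact_mod_cast h
  · refine (Ioc_disjoint_Ioc_of_le (div_le_div_of_nonneg_right ?_ hn.le)).symm
    exact_mod_cast h

lemma exists_mem_gridInterval (hn : 0 < n) {x : ℝ} (hx : x ∈ Ioc 0 1) :
    ∃ i : Fin n, x ∈ gridInterval n i := by
  have hn' : (0 : ℝ) < n := Nat.cast_pos.2 hn
  have hpos : 0 < ⌈n * x⌉₊ := Nat.ceil_pos.2 (mul_pos hn' hx.1)
  have hle : ⌈n * x⌉₊ ≤ n := Nat.ceil_le.2 (by nlinarith [hx.2])
  refine ⟨⟨⌈n * x⌉₊ - 1, by omega⟩, ?_⟩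
  have hcast : ((⌈n * x⌉₊ - 1 : ℕ) : ℝ) = ⌈n * x⌉₊ - 1 := by
    rw [Nat.cast_sub hpos, Nat.cast_one]
  simp only [gridInterval, mem_Ioc, hcast, sub_add_cancel, div_lt_iff₀' hn', le_div_iff₀' hn']
  exact ⟨by linarith [Nat.ceil_lt_add_one (mul_pos hn' hx.1).le], Nat.le_ceil _⟩

lemma measurableSet_gridBox (k : Fin n × Fin n) : MeasurableSet (gridBox n k) :=
  measurableSet_Ioc.prod measurableSet_Ioc

lemma gridBox_subset (k : Fin n × Fin n) : gridBox n k ⊆ Icc 0 1 ×ˢ Icc 0 1 :=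
  prod_mono (gridInterval_subset_Icc k.1) (gridInterval_subset_Icc k.2)

lemma pairwise_disjoint_gridBox : Pairwise (Disjoint on gridBox n) := by
  rintro ⟨i, j⟩ ⟨i', j'⟩ hne
  rw [onFun, gridBox, gridBox, Set.disjoint_prod]
  by_cases hi : i = i'
  · exact .inr (disjoint_gridInterval fun hj => hne (Prod.ext hi hj))
  · exact .inl (disjoint_gridInterval hi)

lemma volSquare_real_gridBox (k : Fin n × Fin n) : volSquare.real (gridBox n k) = 1 / n ^ 2 := by
  rw [measureReal_def, volSquare, gridBox, Measure.prod_prod,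
    Measure.restrict_apply' measurableSet_Icc, Measure.restrict_apply' measurableSet_Icc,
    inter_eq_left.2 (gridInterval_subset_Icc _), inter_eq_left.2 (gridInterval_subset_Icc _),
    volume_gridInterval, volume_gridInterval, ENNReal.toReal_mul,
    ENNReal.toReal_ofReal (by positivity)]
  ring

lemma exists_mem_gridBox (hn : 0 < n) {p : ℝ × ℝ} (hp : p ∈ Ioc (0 : ℝ) 1 ×ˢ Ioc (0 : ℝ) 1) :
    ∃ k, p ∈ gridBox n k := by
  obtain ⟨i, hi⟩ := exists_mem_gridInterval hn hp.1
  obtain ⟨j, hj⟩ := exists_mem_gridInterval hn hp.2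
  exact ⟨(i, j), hi, hj⟩

/-- `ℝ × ℝ` carries the sup metric, so its closed balls are squares: up to a null boundary the
grid boxes are closed balls, which is what the Lebesgue differentiation theorem needs. -/
lemma closedBall_gridCenter (k : Fin n × Fin n) :
    Metric.closedBall (gridCenter n k) (2 * n : ℝ)⁻¹
      = Icc (((k.1 : ℕ) : ℝ) / n) (((k.1 : ℕ) + 1) / n) ×ˢ
          Icc (((k.2 : ℕ) : ℝ) / n) (((k.2 : ℕ) + 1) / n) := by
  have hn : (n : ℝ) ≠ 0 := (Nat.cast_pos.2 k.1.pos).ne'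
  rw [gridCenter, ← closedBall_prod_same, Real.closedBall_eq_Icc, Real.closedBall_eq_Icc]
  congr 2 <;> field_simp <;> ring

lemma gridBox_subset_closedBall (k : Fin n × Fin n) :
    gridBox n k ⊆ Metric.closedBall (gridCenter n k) (2 * n : ℝ)⁻¹ := by
  rw [closedBall_gridCenter]
  exact prod_mono Ioc_subset_Icc_self Ioc_subset_Icc_self

lemma gridBox_ae_eq_closedBall (k : Fin n × Fin n) :
    gridBox n k =ᵐ[volume] Metric.closedBall (gridCenter n k) (2 * n : ℝ)⁻¹ := by
  rw [closedBall_gridCenter, Measure.volume_eq_prod]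
  exact Measure.set_prod_ae_eq Ioc_ae_eq_Icc Ioc_ae_eq_Icc

end Grid

lemma ae_tendsto_blockStep_gridBox {f : ℝ × ℝ → ℝ} (hf : Measurable f)
    (hf01 : ∀ p, f p ∈ Icc (0 : ℝ) 1) :
    ∀ᵐ p ∂volSquare,
      Tendsto (fun n => blockStep volSquare (gridBox n) f p) atTop (𝓝 (binEnt (f p))) := by
  have hloc : LocallyIntegrable f volume := locallyIntegrable_iff.2 fun K hK =>
    .of_bound hK.measure_lt_top hf.aestronglyMeasurable 1 <|
      .of_forall fun p => norm_le_one_of_mem_Icc (hf01 p)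
  have hdiff := volSquare_eq_restrict ▸
    ae_restrict_of_ae (IsUnifLocDoublingMeasure.ae_tendsto_average (μ := volume) hloc 1)
  filter_upwards [hdiff, ae_volSquare_mem_Ioc] with p hp hpI
  rw [← tendsto_add_atTop_iff_nat 1]
  choose k hk using fun n : ℕ => exists_mem_gridBox n.succ_pos hpI
  have hr : Tendsto (fun n : ℕ => (2 * ((n + 1 : ℕ) : ℝ))⁻¹) atTop (𝓝[>] 0) :=
    tendsto_inv_atTop_nhdsGT_zero.comp <|
      (tendsto_natCast_atTop_atTop.comp (tendsto_add_atTop_nat 1)).const_mul_atTop two_pos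
  have hlim := hp (fun n => gridCenter (n + 1) (k n)) _ hr <| .of_forall fun n => by
    rw [one_mul]; exact gridBox_subset_closedBall _ (hk n)
  refine ((continuous_binEnt.tendsto _).comp hlim).congr fun n => ?_
  rw [Function.comp_apply, blockStep_eq_of_mem pairwise_disjoint_gridBox (hk n),
    setAverage_congr (gridBox_ae_eq_closedBall (k n)).symm, setAverage_eq, setAverage_eq,
    volSquare_restrict_of_subset (gridBox_subset _), volSquare_eq_restrict,
    measureReal_restrict_apply (measurableSet_gridBox _),
    inter_eq_left.2 (gridBox_subset _)]

lemma tendsto_blockEnt_gridBox {f : ℝ × ℝ → ℝ} (hf : Measurable f)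
    (hf01 : ∀ p, f p ∈ Icc (0 : ℝ) 1) :
    Tendsto (fun n => blockEnt volSquare (gridBox n) f) atTop
      (𝓝 (∫ p, binEnt (f p) ∂volSquare)) := by
  have hf' := hf.aestronglyMeasurable (μ := volSquare)
  simp_rw [← integral_blockStep (μ := volSquare) (f := f) measurableSet_gridBox]
  exact tendsto_integral_of_dominated_convergence (fun _ => 1)
    (fun n => (measurable_blockStep measurableSet_gridBox).aestronglyMeasurable)
    (integrable_const 1)
    (fun n => .of_forall fun p => norm_le_one_of_mem_Icc <|
      blockStep_mem_Icc pairwise_disjoint_gridBox hf' (.of_forall hf01) p)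
    (ae_tendsto_blockStep_gridBox hf hf01)

lemma abs_setIntegral_le_cutNorm {U : ℝ → ℝ → ℝ} (hU : ∀ x y, |U x y| ≤ 1) {S T : Set ℝ}
    (hS : MeasurableSet S) (hT : MeasurableSet T) :
    |∫ p in S ×ˢ T, U p.1 p.2 ∂volSquare| ≤ cutNorm U := by
  refine le_csSup ⟨1, ?_⟩ ⟨S ∩ Icc 0 1, T ∩ Icc 0 1, hS.inter measurableSet_Icc,
    hT.inter measurableSet_Icc, inter_subset_right, inter_subset_right, ?_⟩
  · rintro r ⟨S', T', -, -, hS', hT', rfl⟩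
    rw [← volSquare_restrict_of_subset (prod_mono hS' hT')]
    calc |∫ p in S' ×ˢ T', U p.1 p.2 ∂volSquare| ≤ 1 * volSquare.real (S' ×ˢ T') :=
          norm_setIntegral_le_of_norm_le_const (f := fun p : ℝ × ℝ => U p.1 p.2)
            (measure_lt_top _ _) fun p _ => (Real.norm_eq_abs _).trans_le (hU p.1 p.2)
      _ ≤ 1 := by rw [one_mul]; exact measureReal_le_one
  · rw [volSquare_eq_restrict, Measure.restrict_restrict (hS.prod hT), prod_inter_prod]

lemma graphonEnt_nonneg {U : ℝ → ℝ → ℝ} (hU : IsGraphon U) : 0 ≤ graphonEnt U :=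
  integral_nonneg fun x => integral_nonneg fun y => (binEnt_mem_Icc (hU.2.2 x y)).1

lemma integral_binEnt_comp_eq_graphonEnt {U : ℝ → ℝ → ℝ} (hU : IsGraphon U) {σ : ℝ → ℝ}
    (hσ : IsMPSelf σ) : ∫ p, binEnt (U (σ p.1) (σ p.2)) ∂volSquare = graphonEnt U := by
  have hT : MeasurePreserving (Prod.map σ σ) volSquare volSquare := hσ.1.prod hσ.1
  rw [← integral_volSquare_eq_graphonEnt hU]
  conv_rhs => rw [← hT.map_eq]
  exact (integral_map hT.measurable.aemeasurable
    (continuous_binEnt.measurable.comp hU.2.1).aestronglyMeasurable).symm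

lemma ae_mem_iUnion_preimage_gridBox {σ : ℝ → ℝ} (hσ : IsMPSelf σ) {n : ℕ} (hn : 0 < n) :
    ∀ᵐ p ∂volSquare, p ∈ ⋃ k, Prod.map σ σ ⁻¹' gridBox n k := by
  rw [← preimage_iUnion]
  exact (hσ.1.prod hσ.1).quasiMeasurePreserving.ae <| ae_volSquare_mem_Ioc.mono fun p hp =>
    mem_iUnion.2 (exists_mem_gridBox hn hp)

lemma graphonEnt_le_blockEnt_add {U W : ℝ → ℝ → ℝ} (hU : IsGraphon U) (hW : IsGraphon W)
    {n : ℕ} (hn : 0 < n) {ε δ : ℝ} (hε : 0 ≤ ε)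
    (hδ : ∀ a ∈ Icc (0 : ℝ) 1, ∀ b ∈ Icc (0 : ℝ) 1, dist a b ≤ δ → dist (binEnt a) (binEnt b) ≤ ε)
    {σ₁ σ₂ : ℝ → ℝ} (h₁ : IsMPSelf σ₁) (h₂ : IsMPSelf σ₂)
    (hcut : cutNorm (fun x y => U (σ₁ x) (σ₁ y) - W (σ₂ x) (σ₂ y)) ≤ δ / n ^ 2) :
    graphonEnt U ≤ blockEnt volSquare (gridBox n) (fun p => W p.1 p.2) + ε := by
  have hT₁ : MeasurePreserving (Prod.map σ₁ σ₁) volSquare volSquare := h₁.1.prod h₁.1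
  have hT₂ : MeasurePreserving (Prod.map σ₂ σ₂) volSquare volSquare := h₂.1.prod h₂.1
  set u : ℝ × ℝ → ℝ := fun p => U (σ₁ p.1) (σ₁ p.2)
  set w : ℝ × ℝ → ℝ := fun p => W (σ₂ p.1) (σ₂ p.2)
  have hu : Measurable u := hU.2.1.comp hT₁.measurable
  have hw : Measurable w := hW.2.1.comp hT₂.measurable
  have hu01 : ∀ᵐ p ∂volSquare, u p ∈ Icc (0 : ℝ) 1 := .of_forall fun p => hU.2.2 _ _
  have hw01 : ∀ᵐ p ∂volSquare, w p ∈ Icc (0 : ℝ) 1 := .of_forall fun p => hW.2.2 _ _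
  set boxes := fun k => Prod.map σ₂ σ₂ ⁻¹' gridBox n k
  have hboxes : ∀ k, MeasurableSet (boxes k) :=
    fun k => hT₂.measurable (measurableSet_gridBox k)
  have hdisj : Pairwise (Disjoint on boxes) :=
    fun k l hkl => (pairwise_disjoint_gridBox hkl).preimage _
  have hbound : ∀ x y, |U (σ₁ x) (σ₁ y) - W (σ₂ x) (σ₂ y)| ≤ 1 := fun x y =>
    (Real.dist_eq _ _).symm.trans_le (Real.dist_le_of_mem_Icc_01 (hU.2.2 _ _) (hW.2.2 _ _))
  have hclose : ∀ k, |∫ p in boxes k, u p ∂volSquare - ∫ p in boxes k, w p ∂volSquare|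
      ≤ δ * volSquare.real (boxes k) := fun k => by
    rw [← integral_sub (integrable_of_mem_Icc hu.aestronglyMeasurable hu01).integrableOn
      (integrable_of_mem_Icc hw.aestronglyMeasurable hw01).integrableOn,
      hT₂.measureReal_preimage (measurableSet_gridBox k).nullMeasurableSet,
      volSquare_real_gridBox, ← div_eq_mul_one_div]
    exact (abs_setIntegral_le_cutNorm hbound (h₂.1.measurable measurableSet_Ioc)
      (h₂.1.measurable measurableSet_Ioc)).trans hcut
  calc graphonEnt U = ∫ p, binEnt (u p) ∂volSquare :=
        (integral_binEnt_comp_eq_graphonEnt hU h₁).symm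
    _ ≤ blockEnt volSquare boxes u :=
      integral_binEnt_le_blockEnt hboxes hdisj (ae_mem_iUnion_preimage_gridBox h₂ hn)
        hu.aestronglyMeasurable hu01
    _ ≤ blockEnt volSquare boxes w + ε :=
      blockEnt_le_blockEnt_add hboxes hdisj hu.aestronglyMeasurable hu01
        hw.aestronglyMeasurable hw01 hε hδ hclose
    _ = blockEnt volSquare (gridBox n) (fun p => W p.1 p.2) + ε := by
      congr 1
      exact blockEnt_comp_preimage hT₂ measurableSet_gridBox hW.2.1.aestronglyMeasurable

lemma exists_cutNorm_lt_of_deltaCut_lt {U W : ℝ → ℝ → ℝ} {r : ℝ} (h : deltaCut U W < r) :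
    ∃ σ₁ σ₂ : ℝ → ℝ, IsMPSelf σ₁ ∧ IsMPSelf σ₂ ∧
      cutNorm (fun x y => U (σ₁ x) (σ₁ y) - W (σ₂ x) (σ₂ y)) < r := by
  have hid : IsMPSelf id := ⟨.id _, mapsTo_id _⟩
  obtain ⟨_, ⟨σ₁, σ₂, h₁, h₂, rfl⟩, hlt⟩ :=
    exists_lt_of_csInf_lt (by exact ⟨_, id, id, hid, hid, rfl⟩) h
  exact ⟨σ₁, σ₂, h₁, h₂, hlt⟩

lemma eventually_graphonEnt_le_add {W : ℝ → ℝ → ℝ} (hW : IsGraphon W) {Wm : ℕ → ℝ → ℝ → ℝ}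
    (hWm : ∀ m, IsGraphon (Wm m)) (hconv : Tendsto (fun m => deltaCut (Wm m) W) atTop (𝓝 0))
    {ε : ℝ} (hε : 0 < ε) : ∀ᶠ m in atTop, graphonEnt (Wm m) ≤ graphonEnt W + ε := by
  obtain ⟨δ, hδ, hcont⟩ :=
    Metric.uniformContinuousOn_iff_le.1 uniformContinuousOn_binEnt (ε / 2) (half_pos hε)
  have hstep := tendsto_blockEnt_gridBox (f := fun p => W p.1 p.2) hW.2.1 fun p => hW.2.2 p.1 p.2
  rw [integral_volSquare_eq_graphonEnt hW] at hstep
  obtain ⟨n, hn, hnpos⟩ := ((hstep.eventually (gt_mem_nhds (lt_add_of_pos_right _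
    (half_pos hε)))).and (eventually_gt_atTop 0)).exists
  filter_upwards [hconv.eventually (gt_mem_nhds (by positivity : (0 : ℝ) < δ / n ^ 2))] with m hm
  obtain ⟨σ₁, σ₂, h₁, h₂, hcut⟩ := exists_cutNorm_lt_of_deltaCut_lt hm
  linarith [graphonEnt_le_blockEnt_add (hWm m) hW hnpos (half_pos hε).le hcont h₁ h₂ hcut.le]

/-- Lemma 3.3(ii): the entropy is upper semicontinuous with respect to
the cut distance. -/
theorem stmt2 (W : ℝ → ℝ → ℝ) (hW : IsGraphon W) (Wm : ℕ → (ℝ → ℝ → ℝ))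
    (hWm : ∀ m, IsGraphon (Wm m))
    (hconv : Filter.Tendsto (fun m => deltaCut (Wm m) W) Filter.atTop (nhds 0)) :
    Filter.limsup (fun m => graphonEnt (Wm m)) Filter.atTop ≤ graphonEnt W :=
  le_of_forall_pos_le_add fun _ hε =>
    limsup_le_of_le (isBoundedUnder_of ⟨0, fun m => graphonEnt_nonneg (hWm m)⟩).isCoboundedUnder_le
      (eventually_graphonEnt_le_add hW hWm hconv hε)
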